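/- Let X ∈ ℝ^{m×n}, β⁰ ∈ ℝⁿ, ε ∈ ℝ^m with ε ≠ 0, b = Xβ⁰ + ε, p a norm on ℝⁿ, λ > 0, σ ≥ 0, τ ≥ 0, and let β̂ minimize F(β) = ‖Xβ − b‖ + λ p(β) + (σ/2)‖β‖² + (τ/2)‖Xβ − b‖² over ℝⁿ. Set ε̂ = b − Xβ̂. Define n_p = λ p(β⁰)/‖ε‖, λ₀ = p_*(Xᵀε)/‖ε‖, t₁ = 1 + (τ/2)‖ε‖ + σ p_*(β⁰) p(β⁰)/(2‖ε‖), c_u = t₁ + n_p, and a = ( λ₀ + σ p_*(β⁰) c_u ) t₁/λ. Assume ‖ε̂‖ ≠ 0 and a + 2λ₀ n_p/λ < 1. Then c_l ≤ ‖ε̂‖/‖ε‖ ≤ c_u, where c_l = (1 − a − 2λ₀ n_p/λ) / ( 2 + (1 + σ p_*(β⁰)/λ) n_p ). -/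

import Mathlib

/-!
Comparing the objective at `βh` with its value at `β0`, and using `‖β0‖² ≤ p_*(β0) p(β0)`, gives
`‖εh‖ + λ p(βh) ≤ ‖ε‖ t₁ + λ p(β0)`, which is the upper bound. For the lower bound, since
`εh = ε - X (βh - β0)`,
`‖ε‖² = ⟪ε, εh⟫ + ⟪Xᵀ ε, βh - β0⟫ ≤ ‖ε‖ ‖εh‖ + p_*(Xᵀ ε) (p(βh) + p(β0))`,
and bounding `λ p(βh)` by the first inequality yields `‖εh‖/‖ε‖ ≥ 1 - λ₀ t₁/λ - 2 λ₀ n_p/λ`.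
This dominates `c_l`: `a ≥ λ₀ t₁/λ`, and the denominator of `c_l` is at least `1`.
-/

open scoped RealInnerProductSpace

noncomputable section

/-- A function `p` is a norm on a real vector space. -/
def IsNorm {E : Type*} [AddCommGroup E] [Module ℝ E] (p : E → ℝ) : Prop :=
  (∀ x y, p (x + y) ≤ p x + p y) ∧ (∀ (c : ℝ) (x : E), p (c • x) = |c| * p x) ∧
    (∀ x, p x = 0 ↔ x = 0)

/-- The dual norm `q_*(z) = sup {⟨z, β⟩ : q β ≤ 1}`. -/
def dualNorm {ι : Type*} [Fintype ι] (q : EuclideanSpace ℝ ι → ℝ)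
    (z : EuclideanSpace ℝ ι) : ℝ :=
  sSup {r : ℝ | ∃ β : EuclideanSpace ℝ ι, q β ≤ 1 ∧ r = ⟪z, β⟫}

/-- `β_S`: the vector agreeing with `β` on `S` and zero on the complement. -/
def projS {n : ℕ} (S : Finset (Fin n)) (β : EuclideanSpace ℝ (Fin n)) :
    EuclideanSpace ℝ (Fin n) :=
  WithLp.toLp 2 (fun i => if i ∈ S then β i else 0)

/-- `β_{S̄}`: the vector agreeing with `β` on the complement of `S` and zero on `S`. -/
def projSc {n : ℕ} (S : Finset (Fin n)) (β : EuclideanSpace ℝ (Fin n)) :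
    EuclideanSpace ℝ (Fin n) :=
  WithLp.toLp 2 (fun i => if i ∈ S then 0 else β i)

/-- `β^{S̄}`: the restriction of `β` to the complement of `S`. -/
def restrC {n : ℕ} (S : Finset (Fin n)) (β : EuclideanSpace ℝ (Fin n)) :
    EuclideanSpace ℝ {i : Fin n // i ∉ S} :=
  WithLp.toLp 2 (fun j => β j.1)

/-- Matrix-vector multiplication as a map between Euclidean spaces. -/
def mulVecE {m n : ℕ} (X : Matrix (Fin m) (Fin n) ℝ) (β : EuclideanSpace ℝ (Fin n)) :
    EuclideanSpace ℝ (Fin m) :=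
  WithLp.toLp 2 (X.mulVec β)

namespace IsNorm

section Module

variable {E : Type*} [AddCommGroup E] [Module ℝ E] {p : E → ℝ}

def toSeminorm (hp : IsNorm p) : Seminorm ℝ E :=
  Seminorm.of p hp.1 fun c x => by rw [hp.2.1, Real.norm_eq_abs]

lemma nonneg (hp : IsNorm p) (x : E) : 0 ≤ p x :=
  apply_nonneg hp.toSeminorm x

lemma map_sub_le (hp : IsNorm p) (x y : E) : p (x - y) ≤ p x + p y :=
  map_sub_le_add hp.toSeminorm x y

end Module

def NormedBy (E : Type*) : Type _ := E

variable {E : Type*} [NormedAddCommGroup E] [NormedSpace ℝ E] [FiniteDimensional ℝ E]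
  {p : E → ℝ}

lemma exists_norm_le_mul (hp : IsNorm p) : ∃ C, 0 ≤ C ∧ ∀ x, ‖x‖ ≤ C * p x := by
  let _ : AddCommGroup (NormedBy E) := inferInstanceAs (AddCommGroup E)
  let _ : Module ℝ (NormedBy E) := inferInstanceAs (Module ℝ E)
  let _ : NormedAddCommGroup (NormedBy E) := AddGroupNorm.toNormedAddCommGroup
    { hp.toSeminorm.toAddGroupSeminorm with
      eq_zero_of_map_eq_zero' := fun x => (hp.2.2 x).mp }
  let _ : NormedSpace ℝ (NormedBy E) :=
    { norm_smul_le := fun c x => (map_smul_eq_mul hp.toSeminorm c x).le }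
  let _ : FiniteDimensional ℝ (NormedBy E) := inferInstanceAs (FiniteDimensional ℝ E)
  let ofNormedBy : NormedBy E →ₗ[ℝ] E := LinearMap.id
  exact ⟨‖LinearMap.toContinuousLinearMap ofNormedBy‖, norm_nonneg _,
    (LinearMap.toContinuousLinearMap ofNormedBy).le_opNorm⟩

end IsNorm

section DualNorm

variable {ι : Type*} [Fintype ι] {p : EuclideanSpace ℝ ι → ℝ}

lemma dualNorm_bddAbove (hp : IsNorm p) (z : EuclideanSpace ℝ ι) :
    BddAbove {r : ℝ | ∃ β : EuclideanSpace ℝ ι, p β ≤ 1 ∧ r = ⟪z, β⟫} := by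
  obtain ⟨C, hC, hnorm⟩ := hp.exists_norm_le_mul
  refine ⟨‖z‖ * C, ?_⟩
  rintro r ⟨β, hβ, rfl⟩
  calc ⟪z, β⟫ ≤ ‖z‖ * ‖β‖ := real_inner_le_norm z β
    _ ≤ ‖z‖ * (C * p β) := by gcongr; exact hnorm β
    _ ≤ ‖z‖ * C := by gcongr; exact mul_le_of_le_one_right hC hβ

lemma dualNorm_nonneg (hp : IsNorm p) (z : EuclideanSpace ℝ ι) : 0 ≤ dualNorm p z :=
  le_csSup (dualNorm_bddAbove hp z) ⟨0, by simp [(hp.2.2 0).mpr rfl]⟩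

lemma inner_le_dualNorm_mul (hp : IsNorm p) (z v : EuclideanSpace ℝ ι) :
    ⟪z, v⟫ ≤ dualNorm p z * p v := by
  rcases (hp.nonneg v).eq_or_lt with h | h
  · rw [(hp.2.2 v).mp h.symm, inner_zero_right, (hp.2.2 0).mpr rfl, mul_zero]
  · have hunit : p ((p v)⁻¹ • v) ≤ 1 := by
      rw [hp.2.1, abs_of_pos (inv_pos.mpr h), inv_mul_cancel₀ h.ne']
    have := le_csSup (dualNorm_bddAbove hp z) ⟨_, hunit, rfl⟩
    rw [real_inner_smul_right, inv_mul_le_iff₀ h, mul_comm] at this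
    exact this

lemma norm_sq_le_dualNorm_mul (hp : IsNorm p) (v : EuclideanSpace ℝ ι) :
    ‖v‖ ^ 2 ≤ dualNorm p v * p v := by
  simpa only [real_inner_self_eq_norm_sq] using inner_le_dualNorm_mul hp v v

end DualNorm

section Regression

variable {m n : ℕ} (X : Matrix (Fin m) (Fin n) ℝ)

lemma mulVecE_sub (x y : EuclideanSpace ℝ (Fin n)) :
    mulVecE X (x - y) = mulVecE X x - mulVecE X y :=
  congrArg (WithLp.toLp 2) (Matrix.mulVec_sub X x y)

lemma inner_mulVecE (u : EuclideanSpace ℝ (Fin m)) (w : EuclideanSpace ℝ (Fin n)) :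
    ⟪u, mulVecE X w⟫ = ⟪mulVecE X.transpose u, w⟫ := by
  simp only [mulVecE, EuclideanSpace.inner_eq_star_dotProduct, star_trivial]
  rw [dotProduct_comm, Matrix.dotProduct_mulVec, dotProduct_comm, Matrix.mulVec_transpose]

def regressionObjective (b : EuclideanSpace ℝ (Fin m)) (p : EuclideanSpace ℝ (Fin n) → ℝ)
    (lam σ τ : ℝ) (β : EuclideanSpace ℝ (Fin n)) : ℝ :=
  ‖mulVecE X β - b‖ + lam * p β + σ / 2 * ‖β‖ ^ 2 + τ / 2 * ‖mulVecE X β - b‖ ^ 2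

variable {β0 βh : EuclideanSpace ℝ (Fin n)} {ε εh b : EuclideanSpace ℝ (Fin m)}
  {p : EuclideanSpace ℝ (Fin n) → ℝ}

lemma residual_add_penalty_le (hp : IsNorm p) {lam σ τ : ℝ} (hσ : 0 ≤ σ) (hτ : 0 ≤ τ)
    (hb : b = mulVecE X β0 + ε) (hεh : εh = b - mulVecE X βh)
    (hmin : regressionObjective X b p lam σ τ βh ≤ regressionObjective X b p lam σ τ β0) :
    ‖εh‖ + lam * p βh ≤
      ‖ε‖ + lam * p β0 + σ / 2 * (dualNorm p β0 * p β0) + τ / 2 * ‖ε‖ ^ 2 := by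
  have hres0 : mulVecE X β0 - b = -ε := by rw [hb]; abel
  have hresh : mulVecE X βh - b = -εh := by rw [hεh]; abel
  simp only [regressionObjective, hres0, hresh, norm_neg] at hmin
  have := norm_sq_le_dualNorm_mul hp β0
  have : σ / 2 * ‖β0‖ ^ 2 ≤ σ / 2 * (dualNorm p β0 * p β0) := by gcongr
  nlinarith [sq_nonneg ‖βh‖, sq_nonneg ‖εh‖]

lemma norm_sq_le_mul_residual_add (hp : IsNorm p) (hb : b = mulVecE X β0 + ε)
    (hεh : εh = b - mulVecE X βh) :
    ‖ε‖ ^ 2 ≤ ‖ε‖ * ‖εh‖ + dualNorm p (mulVecE X.transpose ε) * (p βh + p β0) := by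
  have hεh' : εh = ε - mulVecE X (βh - β0) := by rw [hεh, hb, mulVecE_sub]; abel
  have hsplit : ‖ε‖ ^ 2 = ⟪ε, εh⟫ + ⟪mulVecE X.transpose ε, βh - β0⟫ := by
    rw [hεh', inner_sub_right, real_inner_self_eq_norm_sq, inner_mulVecE]; ring
  rw [hsplit]
  gcongr
  · exact real_inner_le_norm ε εh
  · calc ⟪mulVecE X.transpose ε, βh - β0⟫
        ≤ dualNorm p (mulVecE X.transpose ε) * p (βh - β0) := inner_le_dualNorm_mul hp _ _
      _ ≤ dualNorm p (mulVecE X.transpose ε) * (p βh + p β0) := by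
        gcongr
        · exact dualNorm_nonneg hp _
        · exact hp.map_sub_le βh β0

end Regression

section ResidualRatio

variable {e r P P0 D Q lam σ τ np lam0 t1 : ℝ}

lemma residual_ratio_le (he : 0 < e) (hlam : 0 ≤ lam) (hP : 0 ≤ P)
    (hbasic : r + lam * P ≤ e + lam * P0 + σ / 2 * (Q * P0) + τ / 2 * e ^ 2)
    (hnp : np = lam * P0 / e) (ht1 : t1 = 1 + τ / 2 * e + σ * Q * P0 / (2 * e)) :
    r / e ≤ t1 + np := by
  have hcu : t1 + np = (e + lam * P0 + σ / 2 * (Q * P0) + τ / 2 * e ^ 2) / e := by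
    rw [ht1, hnp]; field_simp; ring
  rw [hcu]
  gcongr
  nlinarith [mul_nonneg hlam hP]

lemma le_residual_ratio (he : 0 < e) (hlam : 0 < lam) (hr : 0 ≤ r) (hD : 0 ≤ D)
    (hbasic : r + lam * P ≤ e + lam * P0 + σ / 2 * (Q * P0) + τ / 2 * e ^ 2)
    (hnoise : e ^ 2 ≤ e * r + D * (P + P0))
    (hnp : np = lam * P0 / e) (hlam0 : lam0 = D / e)
    (ht1 : t1 = 1 + τ / 2 * e + σ * Q * P0 / (2 * e)) :
    1 - lam0 * t1 / lam - 2 * lam0 * np / lam ≤ r / e := by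
  have het1 : e * t1 = e + σ / 2 * (Q * P0) + τ / 2 * e ^ 2 := by
    rw [ht1]; field_simp; ring
  have hpen : lam * P ≤ e * t1 + lam * P0 := by rw [het1]; linarith
  have hkey : lam * e ^ 2 ≤ lam * e * r + D * (e * t1 + 2 * lam * P0) := by
    nlinarith [mul_le_mul_of_nonneg_left hnoise hlam.le, mul_le_mul_of_nonneg_left hpen hD]
  have hlhs : 1 - lam0 * t1 / lam - 2 * lam0 * np / lam =
      (lam * e ^ 2 - D * (e * t1 + 2 * lam * P0)) / (lam * e ^ 2) := by
    rw [hlam0, hnp]; field_simp; ring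
  rw [hlhs, div_le_div_iff₀ (by positivity) he]
  nlinarith [mul_le_mul_of_nonneg_right hkey he.le]

end ResidualRatio

lemma div_le_of_le_of_nonneg_of_one_le {x y s : ℝ} (hx : x ≤ s) (hs : 0 ≤ s) (hy : 1 ≤ y) :
    x / y ≤ s := by
  rcases le_total 0 x with h | h
  · exact (div_le_self h hy).trans hx
  · exact (div_nonpos_of_nonpos_of_nonneg h (by linarith)).trans hs

theorem residual_ratio_bounds_general {m n : ℕ} (X : Matrix (Fin m) (Fin n) ℝ)
    (β0 : EuclideanSpace ℝ (Fin n)) (ε : EuclideanSpace ℝ (Fin m)) (hε : ε ≠ 0)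
    (b : EuclideanSpace ℝ (Fin m)) (hb : b = mulVecE X β0 + ε)
    (p : EuclideanSpace ℝ (Fin n) → ℝ) (hp : IsNorm p)
    (lam σ τ : ℝ) (hlam : 0 < lam) (hσ : 0 ≤ σ) (hτ : 0 ≤ τ)
    (βh : EuclideanSpace ℝ (Fin n))
    (hmin : ∀ β : EuclideanSpace ℝ (Fin n),
      ‖mulVecE X βh - b‖ + lam * p βh + σ / 2 * ‖βh‖ ^ 2 +
          τ / 2 * ‖mulVecE X βh - b‖ ^ 2 ≤
        ‖mulVecE X β - b‖ + lam * p β + σ / 2 * ‖β‖ ^ 2 +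
          τ / 2 * ‖mulVecE X β - b‖ ^ 2)
    (εh : EuclideanSpace ℝ (Fin m)) (hεh : εh = b - mulVecE X βh)
    (np lam0 t1 cu a cl : ℝ)
    (hnp : np = lam * p β0 / ‖ε‖)
    (hlam0 : lam0 = dualNorm p (mulVecE X.transpose ε) / ‖ε‖)
    (ht1 : t1 = 1 + τ / 2 * ‖ε‖ + σ * dualNorm p β0 * p β0 / (2 * ‖ε‖))
    (hcu : cu = t1 + np)
    (ha : a = (lam0 + σ * dualNorm p β0 * cu) * t1 / lam)
    (hcl : cl = (1 - a - 2 * lam0 * np / lam) / (2 + (1 + σ * dualNorm p β0 / lam) * np)) :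
    cl ≤ ‖εh‖ / ‖ε‖ ∧ ‖εh‖ / ‖ε‖ ≤ cu := by
  have he : 0 < ‖ε‖ := norm_pos_iff.mpr hε
  have hQ := dualNorm_nonneg hp β0
  have hP0 := hp.nonneg β0
  have hbasic := residual_add_penalty_le X hp hσ hτ hb hεh (hmin β0)
  have hupper := residual_ratio_le he hlam.le (hp.nonneg βh) hbasic hnp ht1
  have hlower := le_residual_ratio he hlam (norm_nonneg εh) (dualNorm_nonneg hp _) hbasic
    (norm_sq_le_mul_residual_add X hp hb hεh) hnp hlam0 ht1
  have ht1_nonneg : 0 ≤ t1 := by rw [ht1]; positivity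
  have hnp_nonneg : 0 ≤ np := by rw [hnp]; positivity
  have ha_ge : lam0 * t1 / lam ≤ a := by
    have : 0 ≤ σ * dualNorm p β0 * cu * t1 / lam := by rw [hcu]; positivity
    rw [ha, add_mul, add_div]
    linarith
  have hden : 1 ≤ 2 + (1 + σ * dualNorm p β0 / lam) * np := by
    have : 0 ≤ (1 + σ * dualNorm p β0 / lam) * np := by positivity
    linarith
  rw [hcl, hcu]
  exact ⟨div_le_of_le_of_nonneg_of_one_le (by linarith) (by positivity) hden, hupper⟩

/-- `c_l ≤ ‖ε̂‖/‖ε‖ ≤ c_u`. -/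
theorem residual_ratio_bounds {m n : ℕ} (X : Matrix (Fin m) (Fin n) ℝ)
    (β0 : EuclideanSpace ℝ (Fin n)) (ε : EuclideanSpace ℝ (Fin m)) (hε : ε ≠ 0)
    (b : EuclideanSpace ℝ (Fin m)) (hb : b = mulVecE X β0 + ε)
    (p : EuclideanSpace ℝ (Fin n) → ℝ) (hp : IsNorm p)
    (lam σ τ : ℝ) (hlam : 0 < lam) (hσ : 0 ≤ σ) (hτ : 0 ≤ τ)
    (βh : EuclideanSpace ℝ (Fin n))
    (hmin : ∀ β : EuclideanSpace ℝ (Fin n),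
      ‖mulVecE X βh - b‖ + lam * p βh + σ / 2 * ‖βh‖ ^ 2 +
          τ / 2 * ‖mulVecE X βh - b‖ ^ 2 ≤
        ‖mulVecE X β - b‖ + lam * p β + σ / 2 * ‖β‖ ^ 2 +
          τ / 2 * ‖mulVecE X β - b‖ ^ 2)
    (εh : EuclideanSpace ℝ (Fin m)) (hεh : εh = b - mulVecE X βh)
    (np lam0 t1 cu a cl : ℝ)
    (hnp : np = lam * p β0 / ‖ε‖)
    (hlam0 : lam0 = dualNorm p (mulVecE X.transpose ε) / ‖ε‖)
    (ht1 : t1 = 1 + τ / 2 * ‖ε‖ + σ * dualNorm p β0 * p β0 / (2 * ‖ε‖))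
    (hcu : cu = t1 + np)
    (ha : a = (lam0 + σ * dualNorm p β0 * cu) * t1 / lam)
    (hcl : cl = (1 - a - 2 * lam0 * np / lam) / (2 + (1 + σ * dualNorm p β0 / lam) * np))
    (hεhne : ‖εh‖ ≠ 0) (hsmall : a + 2 * lam0 * np / lam < 1) :
    cl ≤ ‖εh‖ / ‖ε‖ ∧ ‖εh‖ / ‖ε‖ ≤ cu :=
  residual_ratio_bounds_general X β0 ε hε b hb p hp lam σ τ hlam hσ hτ βh hmin εh hεh np lam0 t1 cu
    a cl hnp hlam0 ht1 hcu ha hcl
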